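/- arXiv:2509.00228 — 2 statements merged into one kernel-verified Lean document; each statement's English description precedes it below -/
import Mathlib

section
/- Consider the convex program: minimize $\sum_{q=1}^n \psi(w_q)$ over $w \in \mathbb{R}^n$ subject to $|\sum_q w_q B_k(x_q) - B_k^*| \le \delta_k$ for $k = 1, \ldots, K$ and $w_q \ge 0$ for all $q$, where $\psi$ is strictly convex and differentiable. Let $\hat w$ be an optimal solution and $R = \{q : \hat w_q > 0\}$. Then $\hat w$ restricted to $R$ is also an optimal solution of the relaxed program over $\{w \in \mathbb{R}^R : |\sum_{q\in R} w_q B_k(x_q) - B_k^*| \le \delta_k,\, k=1,\ldots,K\}$ without the non-negativity constraints. -/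
open scoped Classical

/-- Restriction–relaxation equivalence (Theorem 1): if `w0` is optimal for the
non-negatively constrained balancing problem and `R = {q : w0 q > 0}`, then
`w0` restricted to `R` is optimal for the relaxed balancing problem over `R`
without the non-negativity constraints. -/
theorem stmt_5 {X : Type*} (n K : ℕ) (x : Fin n → X)
    (B : Fin K → X → ℝ) (Bstar : Fin K → ℝ) (δ : Fin K → ℝ) (hδ : ∀ k, 0 ≤ δ k)
    (ψ : ℝ → ℝ) (hconv : StrictConvexOn ℝ Set.univ ψ) (hdiff : Differentiable ℝ ψ)
    (w0 : Fin n → ℝ)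
    (hfeas : (∀ k, |∑ q, w0 q * B k (x q) - Bstar k| ≤ δ k) ∧ ∀ q, 0 ≤ w0 q)
    (hopt : ∀ w : Fin n → ℝ,
      ((∀ k, |∑ q, w q * B k (x q) - Bstar k| ≤ δ k) ∧ ∀ q, 0 ≤ w q) →
      ∑ q, ψ (w0 q) ≤ ∑ q, ψ (w q)) :
    ∀ w : Fin n → ℝ,
      (∀ k, |(∑ q ∈ Finset.univ.filter (fun q => 0 < w0 q), w q * B k (x q)) - Bstar k| ≤ δ k) →
      ∑ q ∈ Finset.univ.filter (fun q => 0 < w0 q), ψ (w0 q)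
        ≤ ∑ q ∈ Finset.univ.filter (fun q => 0 < w0 q), ψ (w q) := by
  intro w hw
  set s : Finset (Fin n) := Finset.univ.filter (fun q => 0 < w0 q) with hs
  -- w0 vanishes off s
  have hzero : ∀ q ∉ s, w0 q = 0 := by
    intro q hq
    simp only [hs, Finset.mem_filter, Finset.mem_univ, true_and, not_lt] at hq
    exact le_antisymm hq (hfeas.2 q)
  rcases s.eq_empty_or_nonempty with hse | hne
  · simp [hse]
  -- choose a small step size t
  set g : Fin n → ℝ := fun q => if w q < 0 then w0 q / (w0 q - w q) else 1 with hg
  set t : ℝ := min 1 (s.inf' hne g) with ht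
  have hmem : ∀ q ∈ s, 0 < w0 q := by
    intro q hq
    simpa [hs] using (Finset.mem_filter.mp hq).2
  have hgpos : ∀ q ∈ s, 0 < g q := by
    intro q hq
    by_cases h : w q < 0
    · simp only [hg, if_pos h]
      exact div_pos (hmem q hq) (by linarith [hmem q hq])
    · simp [hg, h]
  have htpos : 0 < t := by
    refine lt_min one_pos ?_
    obtain ⟨q, hq, hq'⟩ := s.exists_mem_eq_inf' hne g
    rw [hq']
    exact hgpos q hq
  have ht1 : t ≤ 1 := min_le_left _ _
  -- the perturbed weight vector
  set wt : Fin n → ℝ := fun q => if q ∈ s then (1 - t) * w0 q + t * w q else 0 with hwt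
  -- nonnegativity of wt
  have hwtnn : ∀ q, 0 ≤ wt q := by
    intro q
    by_cases hq : q ∈ s
    · simp only [hwt, if_pos hq]
      by_cases h : w q < 0
      · have htg : t ≤ g q := le_trans (min_le_right _ _) (Finset.inf'_le g hq)
        have hd : 0 < w0 q - w q := by linarith [hmem q hq]
        have : t * (w0 q - w q) ≤ w0 q := by
          have := htg
          rw [hg] at this
          simp only [if_pos h] at this
          calc t * (w0 q - w q) ≤ (w0 q / (w0 q - w q)) * (w0 q - w q) :=
                mul_le_mul_of_nonneg_right this hd.le
            _ = w0 q := by field_simp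
        nlinarith
      · push_neg at h
        have := hmem q hq
        nlinarith
    · simp [hwt, hq]
  -- balance constraints for wt
  have hsum0 : ∀ k, ∑ q, w0 q * B k (x q) = ∑ q ∈ s, w0 q * B k (x q) := by
    intro k
    refine (Finset.sum_subset s.subset_univ ?_).symm
    intro q _ hq; rw [hzero q hq]; ring
  have hwtfeas : ∀ k, |∑ q, wt q * B k (x q) - Bstar k| ≤ δ k := by
    intro k
    have h1 : ∑ q, wt q * B k (x q) = ∑ q ∈ s, wt q * B k (x q) := by
      refine (Finset.sum_subset s.subset_univ ?_).symm
      intro q _ hq; simp [hwt, hq]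
    have h2 : ∑ q ∈ s, wt q * B k (x q)
        = (1 - t) * (∑ q ∈ s, w0 q * B k (x q)) + t * (∑ q ∈ s, w q * B k (x q)) := by
      rw [Finset.mul_sum, Finset.mul_sum, ← Finset.sum_add_distrib]
      refine Finset.sum_congr rfl fun q hq => ?_
      simp only [hwt, if_pos hq]; ring
    have hA := hfeas.1 k
    rw [hsum0 k] at hA
    have hC := hw k
    rw [h1, h2]
    have key : (1 - t) * (∑ q ∈ s, w0 q * B k (x q)) + t * (∑ q ∈ s, w q * B k (x q)) - Bstar k
        = (1 - t) * ((∑ q ∈ s, w0 q * B k (x q)) - Bstar k)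
          + t * ((∑ q ∈ s, w q * B k (x q)) - Bstar k) := by ring
    rw [key]
    calc |(1 - t) * ((∑ q ∈ s, w0 q * B k (x q)) - Bstar k)
          + t * ((∑ q ∈ s, w q * B k (x q)) - Bstar k)|
        ≤ |(1 - t) * ((∑ q ∈ s, w0 q * B k (x q)) - Bstar k)|
          + |t * ((∑ q ∈ s, w q * B k (x q)) - Bstar k)| := abs_add_le _ _
      _ = (1 - t) * |(∑ q ∈ s, w0 q * B k (x q)) - Bstar k|
          + t * |(∑ q ∈ s, w q * B k (x q)) - Bstar k| := by
          rw [abs_mul, abs_mul, abs_of_nonneg (by linarith), abs_of_nonneg htpos.le]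
      _ ≤ (1 - t) * δ k + t * δ k := by
          have h1t : (0:ℝ) ≤ 1 - t := by linarith
          exact add_le_add (mul_le_mul_of_nonneg_left hA h1t)
            (mul_le_mul_of_nonneg_left hC htpos.le)
      _ = δ k := by ring
  -- apply optimality
  have hle := hopt wt ⟨hwtfeas, hwtnn⟩
  -- split sums over s and its complement
  have hsplit0 : ∑ q, ψ (w0 q) = ∑ q ∈ s, ψ (w0 q) + ∑ q ∈ sᶜ, ψ (w0 q) :=
    (Finset.sum_add_sum_compl s _).symm
  have hsplitt : ∑ q, ψ (wt q) = ∑ q ∈ s, ψ (wt q) + ∑ q ∈ sᶜ, ψ (wt q) :=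
    (Finset.sum_add_sum_compl s _).symm
  have hcompl : ∑ q ∈ sᶜ, ψ (w0 q) = ∑ q ∈ sᶜ, ψ (wt q) := by
    refine Finset.sum_congr rfl fun q hq => ?_
    have hq' : q ∉ s := Finset.mem_compl.mp hq
    rw [hzero q hq']; simp [hwt, hq']
  rw [hsplit0, hsplitt, hcompl, add_le_add_iff_right] at hle
  -- convexity bound on s
  have hcvx : ∀ q ∈ s, ψ (wt q) ≤ (1 - t) * ψ (w0 q) + t * ψ (w q) := by
    intro q hq
    have := hconv.convexOn.2 (Set.mem_univ (w0 q)) (Set.mem_univ (w q))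
      (by linarith : (0:ℝ) ≤ 1 - t) htpos.le (by ring)
    simpa [hwt, if_pos hq, smul_eq_mul] using this
  have hsumcvx : ∑ q ∈ s, ψ (wt q) ≤ (1 - t) * ∑ q ∈ s, ψ (w0 q) + t * ∑ q ∈ s, ψ (w q) := by
    rw [Finset.mul_sum, Finset.mul_sum, ← Finset.sum_add_distrib]
    exact Finset.sum_le_sum hcvx
  have : ∑ q ∈ s, ψ (w0 q) ≤ (1 - t) * ∑ q ∈ s, ψ (w0 q) + t * ∑ q ∈ s, ψ (w q) :=
    le_trans hle hsumcvx
  nlinarith [htpos]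
end

section
/- Consider the convex program: minimize $\sum_{q=1}^n c_q \psi(w_q)$ subject to $|\sum_q w_q B_k(x_q) - B_k^*| \le \delta_k$ for all $k$ and $w_q \ge 0$, with $\psi$ strictly convex differentiable and $c_q > 0$. If $\hat w$ is primal optimal and $\lambda^\dagger$ is an optimal dual vector for the balance constraints, then for every unit $q$, $\hat w_q = \rho'\{B(x_q)^\top \lambda^\dagger / c_q\} \cdot \mathbf{1}\{\rho'\{B(x_q)^\top \lambda^\dagger / c_q\} > 0\}$, where $\rho'(v) = -(h')^{-1}(v)$ and $h(x) = \psi(-x)$. -/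
/-!
Write `ŵ_q = -φ((B(x_q)ᵀλ - u_q) / c_q)`, where `u ≥ 0` is the multiplier of the constraint
`w ≥ 0`. Along a line `t ↦ (λ + tμ, u + tν)` the smooth part of the dual objective has derivative
`∑_q ŵ_q ν_q - ∑_k μ_k (∑_q ŵ_q B_k(x_q) - B*_k)` at `t = 0`. Since `(λ, u)` is a dual optimum,
the one-sided derivatives for `t ↓ 0` are nonnegative; the directions `e_q` in `u`, `±e_k` in `λ`
and `-(λ, u)` yield `ŵ ≥ 0`, the balance constraints for `ŵ`, and complementary slackness. These
KKT conditions together with the tangent-line inequality for `ψ` make `ŵ` primal optimal, strict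
convexity makes the primal optimum unique, so `w0 = ŵ`; the truncated formula follows from
`ŵ_q u_q = 0` and the monotonicity of `φ`.
-/

open Filter Set Topology

theorem HasDerivAt.nonneg_of_eventually_ge {f : ℝ → ℝ} {d a : ℝ} (hf : HasDerivAt f d a)
    (h : ∀ᶠ t in 𝓝[>] a, f a ≤ f t) : 0 ≤ d := by
  have hslope : Tendsto (slope f a) (𝓝[>] a) (𝓝 d) :=
    (hasDerivAt_iff_tendsto_slope.1 hf).mono_left (nhdsWithin_mono _ fun t ht => ne_of_gt ht)
  refine ge_of_tendsto hslope ?_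
  filter_upwards [h, self_mem_nhdsWithin] with t hfat hat
  rw [slope_def_field]
  exact div_nonneg (sub_nonneg.2 hfat) (sub_pos.2 hat).le

theorem ConvexOn.add_mul_sub_le_of_hasDerivAt {f : ℝ → ℝ} {f' x : ℝ}
    (hf : ConvexOn ℝ univ f) (hd : HasDerivAt f f' x) (y : ℝ) :
    f x + f' * (y - x) ≤ f y := by
  rcases lt_trichotomy x y with hxy | rfl | hxy
  · have h := hf.le_slope_of_hasDerivAt (mem_univ x) (mem_univ y) hxy hd
    rw [slope_def_field, le_div_iff₀ (sub_pos.2 hxy)] at h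
    linarith
  · simp
  · have h := hf.slope_le_of_hasDerivAt (mem_univ y) (mem_univ x) hxy hd
    rw [slope_def_field, div_le_iff₀ (sub_pos.2 hxy)] at h
    linarith

theorem StrictConvexOn.strictMono_of_hasDerivAt {f f' : ℝ → ℝ} (hf : StrictConvexOn ℝ univ f)
    (hd : ∀ x, HasDerivAt f (f' x) x) : StrictMono f' := fun x y hxy =>
  (hf.lt_slope_of_hasDerivAt (mem_univ x) (mem_univ y) hxy (hd x)).trans
    (hf.slope_lt_of_hasDerivAt (mem_univ x) (mem_univ y) hxy (hd y))

theorem Monotone.of_leftInverse {f g : ℝ → ℝ} (hg : Monotone g) (hgf : ∀ v, g (f v) = v) :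
    Monotone f := by
  intro s t hst
  by_contra! hlt
  have hts : t ≤ s := by simpa only [hgf] using hg hlt.le
  exact hlt.ne (congrArg f (le_antisymm hst hts).symm)

theorem neg_eq_ite_of_mul_eq_zero {g : ℝ → ℝ} (hg : Monotone g) {a u c : ℝ} (hc : 0 < c)
    (hu : 0 ≤ u) (hnonneg : 0 ≤ -g ((a - u) / c)) (hslack : -g ((a - u) / c) * u = 0) :
    -g ((a - u) / c) = if 0 < -g (a / c) then -g (a / c) else 0 := by
  rcases hu.eq_or_lt with rfl | hu
  · rw [sub_zero] at hnonneg ⊢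
    split_ifs with h <;> linarith
  · have hzero : -g ((a - u) / c) = 0 := (mul_eq_zero.1 hslack).resolve_right hu.ne'
    have hle : g ((a - u) / c) ≤ g (a / c) := hg (by gcongr; linarith)
    rw [if_neg (by linarith), hzero]

noncomputable section

namespace BalancingWeights

variable {ι κ : Type*} [Fintype ι]

def imbalance (b : ι → κ → ℝ) (Bstar : κ → ℝ) (w : ι → ℝ) (k : κ) : ℝ :=
  ∑ q, w q * b q k - Bstar k

def IsBalanced (b : ι → κ → ℝ) (Bstar δ : κ → ℝ) (w : ι → ℝ) : Prop :=
  (∀ k, |imbalance b Bstar w k| ≤ δ k) ∧ ∀ q, 0 ≤ w q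

def primalObjective (c : ι → ℝ) (ψ : ℝ → ℝ) (w : ι → ℝ) : ℝ := ∑ q, c q * ψ (w q)

theorem convex_setOf_isBalanced {b : ι → κ → ℝ} {Bstar δ : κ → ℝ} :
    Convex ℝ {w | IsBalanced b Bstar δ w} := by
  intro w hw w' hw' s t hs ht hst
  refine ⟨fun k => ?_, fun q => ?_⟩
  · have hmix : imbalance b Bstar (s • w + t • w') k
        = s * imbalance b Bstar w k + t * imbalance b Bstar w' k := by
      simp only [imbalance, Pi.add_apply, Pi.smul_apply, smul_eq_mul, add_mul,
        Finset.sum_add_distrib, Finset.mul_sum, mul_sub, mul_assoc]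
      linear_combination Bstar k * hst
    calc |imbalance b Bstar (s • w + t • w') k|
        ≤ s * |imbalance b Bstar w k| + t * |imbalance b Bstar w' k| := by
          rw [hmix]
          refine (abs_add_le _ _).trans_eq ?_
          rw [abs_mul, abs_mul, abs_of_nonneg hs, abs_of_nonneg ht]
      _ ≤ s * δ k + t * δ k := by gcongr; exacts [hw.1 k, hw'.1 k]
      _ = δ k := by rw [← add_mul, hst, one_mul]
  · exact add_nonneg (mul_nonneg hs (hw.2 q)) (mul_nonneg ht (hw'.2 q))

theorem strictConvexOn_primalObjective {c : ι → ℝ} {ψ : ℝ → ℝ} (hc : ∀ q, 0 < c q)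
    (hψ : StrictConvexOn ℝ univ ψ) :
    StrictConvexOn ℝ univ (primalObjective c ψ) := by
  refine ⟨convex_univ, fun w _ w' _ hne s t hs ht hst => ?_⟩
  obtain ⟨q₀, hq₀⟩ := Function.ne_iff.1 hne
  have hle : ∀ q, c q * ψ (s * w q + t * w' q) ≤ s * (c q * ψ (w q)) + t * (c q * ψ (w' q)) :=
    fun q => by
      have := hψ.convexOn.2 (mem_univ (w q)) (mem_univ (w' q)) hs.le ht.le hst
      simp only [smul_eq_mul] at this
      nlinarith [hc q]
  have hlt : c q₀ * ψ (s * w q₀ + t * w' q₀) < s * (c q₀ * ψ (w q₀)) + t * (c q₀ * ψ (w' q₀)) := by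
    have := hψ.2 (mem_univ (w q₀)) (mem_univ (w' q₀)) hq₀ hs ht hst
    simp only [smul_eq_mul] at this
    nlinarith [hc q₀]
  simp only [primalObjective, Pi.add_apply, Pi.smul_apply, smul_eq_mul, Finset.mul_sum,
    ← Finset.sum_add_distrib]
  exact Finset.sum_lt_sum (fun q _ => hle q) ⟨q₀, Finset.mem_univ _, hlt⟩

variable [Fintype κ]

def dualLoss (c : ι → ℝ) (ρ : ℝ → ℝ) (b : ι → κ → ℝ) (Bstar : κ → ℝ) (lam : κ → ℝ)
    (u : ι → ℝ) : ℝ :=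
  (∑ q, -(c q) * ρ (((∑ k, b q k * lam k) - u q) / c q)) + ∑ k, Bstar k * lam k

def dualPenalty (δ lam : κ → ℝ) : ℝ := ∑ k, |lam k| * δ k

def dualObjective (c : ι → ℝ) (ρ : ℝ → ℝ) (b : ι → κ → ℝ) (Bstar δ : κ → ℝ) (lam : κ → ℝ)
    (u : ι → ℝ) : ℝ :=
  dualLoss c ρ b Bstar lam u + dualPenalty δ lam

def dualWeights (φ : ℝ → ℝ) (c : ι → ℝ) (b : ι → κ → ℝ) (lam : κ → ℝ) (u : ι → ℝ) (q : ι) : ℝ :=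
  -φ (((∑ k, b q k * lam k) - u q) / c q)

def IsDualOptimal (c : ι → ℝ) (ρ : ℝ → ℝ) (b : ι → κ → ℝ) (Bstar δ : κ → ℝ) (lam : κ → ℝ)
    (u : ι → ℝ) : Prop :=
  0 ≤ u ∧ ∀ lam' u', 0 ≤ u' →
    dualObjective c ρ b Bstar δ lam u ≤ dualObjective c ρ b Bstar δ lam' u'

variable {c : ι → ℝ} {ρ φ ψ ψ' : ℝ → ℝ} {b : ι → κ → ℝ} {Bstar δ : κ → ℝ}

theorem IsBalanced.sum_mul_imbalance_le {w : ι → ℝ} (hw : IsBalanced b Bstar δ w) (lam : κ → ℝ) :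
    ∑ k, lam k * imbalance b Bstar w k ≤ dualPenalty δ lam := by
  refine Finset.sum_le_sum fun k _ => ?_
  calc lam k * imbalance b Bstar w k ≤ |lam k| * |imbalance b Bstar w k| := by
        rw [← abs_mul]; exact le_abs_self _
    _ ≤ |lam k| * δ k := by gcongr; exact hw.1 k

theorem sum_mul_imbalance_sub (lam : κ → ℝ) (w w' : ι → ℝ) :
    ∑ k, lam k * (imbalance b Bstar w' k - imbalance b Bstar w k)
      = ∑ q, (∑ k, b q k * lam k) * (w' q - w q) := by
  simp only [imbalance, sub_sub_sub_cancel_right, ← Finset.sum_sub_distrib, Finset.mul_sum,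
    Finset.sum_mul]
  rw [Finset.sum_comm]
  exact Finset.sum_congr rfl fun q _ => Finset.sum_congr rfl fun k _ => by ring

theorem hasDerivAt_dualLoss_line (hρ : ∀ v, HasDerivAt ρ (-(φ v)) v) (hc : ∀ q, c q ≠ 0)
    (lam μ : κ → ℝ) (u ν : ι → ℝ) :
    HasDerivAt (fun t : ℝ => dualLoss c ρ b Bstar (lam + t • μ) (u + t • ν))
      (∑ q, dualWeights φ c b lam u q * ν q
        - ∑ k, μ k * imbalance b Bstar (dualWeights φ c b lam u) k) 0 := by
  have hinner : ∀ q, HasDerivAt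
      (fun t : ℝ => ((∑ k, b q k * (lam + t • μ) k) - (u + t • ν) q) / c q)
      (((∑ k, b q k * μ k) - ν q) / c q) 0 := by
    intro q
    simp only [Pi.add_apply, Pi.smul_apply, smul_eq_mul]
    refine ((HasDerivAt.fun_sum fun k _ => ?_).sub ?_).div_const (c q)
    · simpa using (((hasDerivAt_id (0 : ℝ)).mul_const (μ k)).const_add (lam k)).const_mul (b q k)
    · simpa using ((hasDerivAt_id (0 : ℝ)).mul_const (ν q)).const_add (u q)
  have hterm : ∀ q, HasDerivAt
      (fun t : ℝ => -(c q) * ρ (((∑ k, b q k * (lam + t • μ) k) - (u + t • ν) q) / c q))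
      (dualWeights φ c b lam u q * (ν q - ∑ k, b q k * μ k)) 0 := by
    intro q
    refine (((hρ _).comp 0 (hinner q)).const_mul (-(c q))).congr_deriv ?_
    simp only [dualWeights, zero_smul, add_zero]
    field_simp [hc q]
    ring
  have hlin : HasDerivAt (fun t : ℝ => ∑ k, Bstar k * (lam + t • μ) k) (∑ k, Bstar k * μ k) 0 := by
    simp only [Pi.add_apply, Pi.smul_apply, smul_eq_mul]
    refine HasDerivAt.fun_sum fun k _ => ?_
    simpa using (((hasDerivAt_id (0 : ℝ)).mul_const (μ k)).const_add (lam k)).const_mul (Bstar k)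
  refine ((HasDerivAt.fun_sum (u := Finset.univ) fun q _ => hterm q).add hlin).congr_deriv ?_
  simp only [imbalance, mul_sub, Finset.sum_sub_distrib, Finset.mul_sum]
  rw [Finset.sum_comm]
  simp only [mul_comm, mul_left_comm]
  ring

theorem dualPenalty_add_smul_le (hδ : 0 ≤ δ) (lam μ : κ → ℝ) {t : ℝ} (ht : 0 ≤ t) :
    dualPenalty δ (lam + t • μ) ≤ dualPenalty δ lam + t * dualPenalty δ μ := by
  simp only [dualPenalty, Finset.mul_sum, ← Finset.sum_add_distrib]
  refine Finset.sum_le_sum fun k _ => ?_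
  calc |lam k + t * μ k| * δ k ≤ (|lam k| + t * |μ k|) * δ k := by
        gcongr ?_ * _
        · exact hδ k
        · simpa [abs_mul, abs_of_nonneg ht] using abs_add_le (lam k) (t * μ k)
    _ = |lam k| * δ k + t * (|μ k| * δ k) := by ring

theorem dualPenalty_add_smul_neg_self (lam : κ → ℝ) {t : ℝ} (ht : t ≤ 1) :
    dualPenalty δ (lam + t • -lam) = dualPenalty δ lam + t * -dualPenalty δ lam := by
  have hscale : ∀ k, |lam k + t * -lam k| = (1 - t) * |lam k| := fun k => by
    rw [← abs_of_nonneg (sub_nonneg.2 ht), ← abs_mul]; ring_nf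
  simp only [dualPenalty, Pi.add_apply, Pi.smul_apply, Pi.neg_apply, smul_eq_mul, hscale,
    Finset.mul_sum, ← Finset.sum_neg_distrib, ← Finset.sum_add_distrib]
  exact Finset.sum_congr rfl fun k _ => by ring

theorem dualPenalty_single [DecidableEq κ] (k : κ) (a : ℝ) :
    dualPenalty δ (Pi.single k a) = |a| * δ k := by
  rw [dualPenalty, Finset.sum_eq_single k (fun j _ hj => by simp [hj]) (by simp)]
  simp

namespace IsDualOptimal

variable {lam : κ → ℝ} {u : ι → ℝ}

theorem deriv_add_slope_nonneg (hopt : IsDualOptimal c ρ b Bstar δ lam u)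
    (hρ : ∀ v, HasDerivAt ρ (-(φ v)) v) (hc : ∀ q, c q ≠ 0) {μ : κ → ℝ} {ν : ι → ℝ} {s : ℝ}
    (hline : ∀ᶠ t in 𝓝[>] (0 : ℝ),
      0 ≤ u + t • ν ∧ dualPenalty δ (lam + t • μ) ≤ dualPenalty δ lam + t * s) :
    0 ≤ ∑ q, dualWeights φ c b lam u q * ν q
      - ∑ k, μ k * imbalance b Bstar (dualWeights φ c b lam u) k + s := by
  have hderiv := (hasDerivAt_dualLoss_line (b := b) (Bstar := Bstar) hρ hc lam μ u ν).add
    ((hasDerivAt_mul_const s).const_add (dualPenalty δ lam))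
  refine hderiv.nonneg_of_eventually_ge ?_
  filter_upwards [hline] with t ⟨hu, hpen⟩
  have hle := hopt.2 (lam + t • μ) (u + t • ν) hu
  simp only [dualObjective] at hle
  simp only [Pi.add_apply, zero_smul, add_zero, zero_mul]
  linarith

theorem dualWeights_nonneg (hopt : IsDualOptimal c ρ b Bstar δ lam u)
    (hρ : ∀ v, HasDerivAt ρ (-(φ v)) v) (hc : ∀ q, c q ≠ 0) (q : ι) :
    0 ≤ dualWeights φ c b lam u q := by
  classical
  have h := hopt.deriv_add_slope_nonneg hρ hc (μ := 0) (ν := Pi.single q 1) (s := 0) <| by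
    filter_upwards [self_mem_nhdsWithin] with t (ht : 0 < t)
    refine ⟨add_nonneg hopt.1 (smul_nonneg ht.le ?_), by simp⟩
    simp
  simpa [Pi.single_apply] using h

theorem sum_mul_imbalance_le (hopt : IsDualOptimal c ρ b Bstar δ lam u)
    (hρ : ∀ v, HasDerivAt ρ (-(φ v)) v) (hc : ∀ q, c q ≠ 0) (hδ : 0 ≤ δ) (μ : κ → ℝ) :
    ∑ k, μ k * imbalance b Bstar (dualWeights φ c b lam u) k ≤ dualPenalty δ μ := by
  have h := hopt.deriv_add_slope_nonneg hρ hc (μ := μ) (ν := 0) <| by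
    filter_upwards [self_mem_nhdsWithin] with t (ht : 0 < t)
    exact ⟨by simpa using hopt.1, dualPenalty_add_smul_le hδ lam μ ht.le⟩
  simpa using h

theorem isBalanced_dualWeights (hopt : IsDualOptimal c ρ b Bstar δ lam u)
    (hρ : ∀ v, HasDerivAt ρ (-(φ v)) v) (hc : ∀ q, c q ≠ 0) (hδ : 0 ≤ δ) :
    IsBalanced b Bstar δ (dualWeights φ c b lam u) := by
  classical
  refine ⟨fun k => abs_le.2 ⟨?_, ?_⟩, hopt.dualWeights_nonneg hρ hc⟩
  · have h := hopt.sum_mul_imbalance_le hρ hc hδ (Pi.single k (-1))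
    simp [Pi.single_apply, ite_mul, dualPenalty_single] at h
    linarith
  · simpa [Pi.single_apply, ite_mul, dualPenalty_single] using
      hopt.sum_mul_imbalance_le hρ hc hδ (Pi.single k 1)

theorem complementarySlackness (hopt : IsDualOptimal c ρ b Bstar δ lam u)
    (hρ : ∀ v, HasDerivAt ρ (-(φ v)) v) (hc : ∀ q, c q ≠ 0) (hδ : 0 ≤ δ) :
    (∀ q, dualWeights φ c b lam u q * u q = 0) ∧
      ∑ k, lam k * imbalance b Bstar (dualWeights φ c b lam u) k = dualPenalty δ lam := by
  have hshrink := hopt.deriv_add_slope_nonneg hρ hc (μ := -lam) (ν := -u)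
    (s := -dualPenalty δ lam) <| by
    filter_upwards [Ioo_mem_nhdsGT zero_lt_one] with t ht
    refine ⟨fun q => ?_, (dualPenalty_add_smul_neg_self lam ht.2.le).le⟩
    have hq : 0 ≤ (1 - t) * u q := mul_nonneg (sub_nonneg.2 ht.2.le) (hopt.1 q)
    simp only [Pi.zero_apply, Pi.add_apply, Pi.smul_apply, Pi.neg_apply, smul_eq_mul]
    linarith
  have hpen := hopt.sum_mul_imbalance_le hρ hc hδ lam
  have hterm : ∀ q ∈ Finset.univ, 0 ≤ dualWeights φ c b lam u q * u q :=
    fun q _ => mul_nonneg (hopt.dualWeights_nonneg hρ hc q) (hopt.1 q)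
  simp only [Pi.neg_apply, mul_neg, neg_mul, Finset.sum_neg_distrib] at hshrink
  have hsum : ∑ q, dualWeights φ c b lam u q * u q = 0 :=
    le_antisymm (by linarith) (Finset.sum_nonneg hterm)
  exact ⟨fun q => (Finset.sum_eq_zero_iff_of_nonneg hterm).1 hsum q (Finset.mem_univ q),
    by linarith⟩

theorem isMinOn_dualWeights (hopt : IsDualOptimal c ρ b Bstar δ lam u)
    (hρ : ∀ v, HasDerivAt ρ (-(φ v)) v) (hc : ∀ q, 0 < c q) (hδ : 0 ≤ δ) (hψ : ConvexOn ℝ univ ψ)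
    (hψ' : ∀ y, HasDerivAt ψ (ψ' y) y) (hφ : ∀ v, -ψ' (-(φ v)) = v) :
    IsMinOn (primalObjective c ψ) {w | IsBalanced b Bstar δ w} (dualWeights φ c b lam u) := by
  refine isMinOn_iff.2 fun w' hw' => ?_
  set w := dualWeights φ c b lam u
  obtain ⟨hslack, hpen⟩ := hopt.complementarySlackness hρ (fun q => (hc q).ne') hδ
  have hgrad : ∀ q, c q * ψ' (w q) = u q - ∑ k, b q k * lam k := fun q => by
    have h := hφ (((∑ k, b q k * lam k) - u q) / c q)
    simp only [w, dualWeights]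
    field_simp [(hc q).ne'] at h ⊢
    linarith
  have htangent : ∀ q ∈ Finset.univ,
      c q * ψ (w q) + (u q - ∑ k, b q k * lam k) * (w' q - w q) ≤ c q * ψ (w' q) := fun q _ => by
    rw [← hgrad, mul_assoc, ← mul_add]
    exact mul_le_mul_of_nonneg_left (hψ.add_mul_sub_le_of_hasDerivAt (hψ' (w q)) (w' q))
      (hc q).le
  have hgap : 0 ≤ ∑ q, (u q - ∑ k, b q k * lam k) * (w' q - w q) := by
    have hdecomp : ∑ q, (u q - ∑ k, b q k * lam k) * (w' q - w q)
        = ∑ q, u q * w' q - ∑ q, w q * u q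
          - ∑ k, lam k * (imbalance b Bstar w' k - imbalance b Bstar w k) := by
      rw [sum_mul_imbalance_sub, ← Finset.sum_sub_distrib, ← Finset.sum_sub_distrib]
      exact Finset.sum_congr rfl fun q _ => by ring
    have hw'pen := IsBalanced.sum_mul_imbalance_le hw' lam
    rw [hdecomp, Finset.sum_eq_zero fun q _ => hslack q]
    simp only [mul_sub, Finset.sum_sub_distrib]
    linarith [Finset.sum_nonneg fun q (_ : q ∈ Finset.univ) => mul_nonneg (hopt.1 q) (hw'.2 q)]
  have hsum := Finset.sum_le_sum htangent
  rw [Finset.sum_add_distrib] at hsum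
  simp only [primalObjective]
  linarith

end IsDualOptimal

end BalancingWeights

end

open BalancingWeights

theorem stmt_6_general {X : Type*} (n K : ℕ) (x : Fin n → X)
    (B : Fin K → X → ℝ) (Bstar : Fin K → ℝ) (δ : Fin K → ℝ)
    (c : Fin n → ℝ) (hc : ∀ q, 0 < c q)
    (ψ ψ' : ℝ → ℝ) (hconv : StrictConvexOn ℝ Set.univ ψ)
    (hψ : ∀ y, HasDerivAt ψ (ψ' y) y)
    (φ : ℝ → ℝ) (hφ₁ : ∀ v, -ψ' (-(φ v)) = v)
    (ρ : ℝ → ℝ) (hρ : ∀ v, HasDerivAt ρ (-(φ v)) v)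
    (w0 : Fin n → ℝ)
    (hfeas : (∀ k, |∑ q, w0 q * B k (x q) - Bstar k| ≤ δ k) ∧ ∀ q, 0 ≤ w0 q)
    (hopt : ∀ w : Fin n → ℝ,
      ((∀ k, |∑ q, w q * B k (x q) - Bstar k| ≤ δ k) ∧ ∀ q, 0 ≤ w q) →
      ∑ q, c q * ψ (w0 q) ≤ ∑ q, c q * ψ (w q))
    (lam : Fin K → ℝ) (u : Fin n → ℝ) (hu : ∀ q, 0 ≤ u q)
    (hdual : ∀ (lam' : Fin K → ℝ) (u' : Fin n → ℝ), (∀ q, 0 ≤ u' q) →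
      (∑ q, -(c q) * ρ (((∑ k, B k (x q) * lam k) - u q) / c q))
          + (∑ k, Bstar k * lam k) + (∑ k, |lam k| * δ k)
        ≤ (∑ q, -(c q) * ρ (((∑ k, B k (x q) * lam' k) - u' q) / c q))
          + (∑ k, Bstar k * lam' k) + (∑ k, |lam' k| * δ k)) :
    ∀ q, w0 q =
      if 0 < -(φ ((∑ k, B k (x q) * lam k) / c q))
      then -(φ ((∑ k, B k (x q) * lam k) / c q)) else 0 := by
  set b : Fin n → Fin K → ℝ := fun q k => B k (x q)
  have hc₀ : ∀ q, c q ≠ 0 := fun q => (hc q).ne'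
  have hδ : 0 ≤ δ := fun k => (abs_nonneg _).trans (hfeas.1 k)
  have hdopt : IsDualOptimal c ρ b Bstar δ lam u := ⟨hu, hdual⟩
  have hw0 : w0 = dualWeights φ c b lam u :=
    ((strictConvexOn_primalObjective hc hconv).subset (subset_univ _)
      convex_setOf_isBalanced).eq_of_isMinOn (isMinOn_iff.2 hopt)
      (hdopt.isMinOn_dualWeights hρ hc hδ hconv.convexOn hψ hφ₁) hfeas
      (hdopt.isBalanced_dualWeights hρ hc₀ hδ)
  have hφ : Monotone φ := Monotone.of_leftInverse (g := fun y => -ψ' (-y))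
    (fun _ _ h => neg_le_neg ((hconv.strictMono_of_hasDerivAt hψ).monotone (neg_le_neg h))) hφ₁
  intro q
  rw [hw0]
  exact neg_eq_ite_of_mul_eq_zero hφ (hc q) (hu q) (hdopt.dualWeights_nonneg hρ hc₀ q)
    ((hdopt.complementarySlackness hρ hc₀ hδ).1 q)

/-- Dual characterization of the optimal balancing weights (Theorem S.1(b)):
if `ŵ` is primal optimal for the scaled, non-negatively constrained balancing
problem and `(lam, u)` is optimal for the dual problem (with `u ≥ 0` the
multipliers for the non-negativity constraints), then
`ŵ_q = ρ'(B(x_q)ᵀlam / c_q)·1{ρ'(B(x_q)ᵀlam / c_q) > 0}`, where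
`ρ'(v) = -(h')⁻¹(v) = -φ(v)` and `h(x) = ψ(-x)` (so `h'(y) = -ψ'(-y)`). -/
theorem stmt_6 {X : Type*} (n K : ℕ) (x : Fin n → X)
    (B : Fin K → X → ℝ) (Bstar : Fin K → ℝ) (δ : Fin K → ℝ)
    (c : Fin n → ℝ) (hc : ∀ q, 0 < c q)
    (ψ ψ' : ℝ → ℝ) (hconv : StrictConvexOn ℝ Set.univ ψ)
    (hψ : ∀ y, HasDerivAt ψ (ψ' y) y)
    (φ : ℝ → ℝ) (hφ₁ : ∀ v, -ψ' (-(φ v)) = v) (hφ₂ : ∀ y, φ (-ψ' (-y)) = y)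
    (ρ : ℝ → ℝ) (hρ : ∀ v, HasDerivAt ρ (-(φ v)) v)
    (w0 : Fin n → ℝ)
    (hfeas : (∀ k, |∑ q, w0 q * B k (x q) - Bstar k| ≤ δ k) ∧ ∀ q, 0 ≤ w0 q)
    (hopt : ∀ w : Fin n → ℝ,
      ((∀ k, |∑ q, w q * B k (x q) - Bstar k| ≤ δ k) ∧ ∀ q, 0 ≤ w q) →
      ∑ q, c q * ψ (w0 q) ≤ ∑ q, c q * ψ (w q))
    (lam : Fin K → ℝ) (u : Fin n → ℝ) (hu : ∀ q, 0 ≤ u q)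
    (hdual : ∀ (lam' : Fin K → ℝ) (u' : Fin n → ℝ), (∀ q, 0 ≤ u' q) →
      (∑ q, -(c q) * ρ (((∑ k, B k (x q) * lam k) - u q) / c q))
          + (∑ k, Bstar k * lam k) + (∑ k, |lam k| * δ k)
        ≤ (∑ q, -(c q) * ρ (((∑ k, B k (x q) * lam' k) - u' q) / c q))
          + (∑ k, Bstar k * lam' k) + (∑ k, |lam' k| * δ k)) :
    ∀ q, w0 q =
      if 0 < -(φ ((∑ k, B k (x q) * lam k) / c q))
      then -(φ ((∑ k, B k (x q) * lam k) / c q)) else 0 :=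
  stmt_6_general n K x B Bstar δ c hc ψ ψ' hconv hψ φ hφ₁ ρ hρ w0 hfeas hopt lam u hu hdual
end
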